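/- Let $(\theta_k)_{k \geq 1}$ be a sequence with $\theta_k \in (0,1]$ and suppose there exist constants $c > 0$ and a function $g(k) = \log(2kC+1)$ (for a fixed positive integer $C$) such that for all $k, l \geq 1$: $\theta_{k+l} \leq (2lC+1)\,\theta_l\,\theta_k$ and $\theta_{k+l} \geq \frac{1}{2lC+1}\,\theta_l\,\theta_k$. Then the limit $\phi = \lim_{k \to \infty} -\frac{\log \theta_k}{k}$ exists and is finite, and there exist positive constants $\sigma_1, \sigma_2$ such that $\sigma_1 k^{-1} e^{-k\phi} \leq \theta_k \leq \sigma_2 k\, e^{-k\phi}$ for all $k \geq 1$. -/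

import Mathlib

/-!
Put `a k = -log θ k`. The two hypotheses say that `a` is additive up to the defect
`log (2 min(k, l) C + 1)`, and this defect is absorbed by `g k = log (6 C k)`:
`(2kC + 1)(k + l) ≤ 6Ckl` for `k ≤ l`. Hence `a + g` and `g - a` are both subadditive, so by
Fekete's lemma `(a k + g k) / k` and `(g k - a k) / k` converge to their infima. As `g k / k → 0`
these limits are `φ` and `-φ`, with `φ = lim a k / k`, and the infimum bounds give
`|a k - k φ| ≤ g k`, which exponentiates to the two-sided estimate with `σ₁ = (6C)⁻¹`, `σ₂ = 6C`.
-/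

open Real Filter Topology

theorem subadditive_ite_zero {u : ℕ → ℝ}
    (h : ∀ m n, 1 ≤ m → 1 ≤ n → u (m + n) ≤ u m + u n) :
    Subadditive fun n => if n = 0 then 0 else u n := by
  intro m n
  rcases Nat.eq_zero_or_pos m with rfl | hm
  · simp
  rcases Nat.eq_zero_or_pos n with rfl | hn
  · simp
  simpa [hm.ne', hn.ne'] using h m n hm hn

theorem Subadditive.le_div_of_tendsto {u : ℕ → ℝ} (hu : Subadditive u) {L : ℝ}
    (hL : Tendsto (fun n => u n / n) atTop (𝓝 L)) {k : ℕ} (hk : k ≠ 0) : L ≤ u k / k := by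
  have hbdd := hL.bddBelow_range
  rw [← tendsto_nhds_unique (hu.tendsto_lim hbdd) hL]
  exact hu.lim_le_div hbdd hk

theorem Subadditive.bddBelow_div_of_le_add {b u w : ℕ → ℝ} (hu : Subadditive u)
    (hw : BddBelow (Set.range fun n => w n / n)) (hwbu : ∀ n ≠ 0, w n ≤ b n + u n) :
    BddBelow (Set.range fun n => b n / n) := by
  obtain ⟨m, hm⟩ := hw
  have hm0 : m ≤ 0 := by simpa using hm ⟨0, rfl⟩
  refine ⟨m - |u 1| - |u 0|, ?_⟩
  rintro _ ⟨n, rfl⟩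
  rcases Nat.eq_zero_or_pos n with rfl | hn
  · simp only [Nat.cast_zero, div_zero]
    linarith [abs_nonneg (u 1), abs_nonneg (u 0)]
  have hn' : (1 : ℝ) ≤ n := by exact_mod_cast hn
  have hu_lin : u n ≤ n * |u 1| + n * |u 0| := by
    have := hu.apply_mul_add_le n 1 0
    rw [mul_one, add_zero] at this
    nlinarith [le_abs_self (u 1), le_abs_self (u 0), abs_nonneg (u 0)]
  have hwn : m * n ≤ w n := by
    have := hm ⟨n, rfl⟩
    rwa [le_div_iff₀ (by positivity)] at this
  rw [le_div_iff₀ (by positivity)]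
  linarith [hwbu n hn.ne']

theorem exists_tendsto_div_and_abs_sub_le_of_abs_sub_le {a g : ℕ → ℝ}
    (hag : ∀ k l, 1 ≤ k → k ≤ l → |a (k + l) - a k - a l| + g (k + l) ≤ g k + g l)
    (hg : Tendsto (fun n => g n / n) atTop (𝓝 0)) :
    ∃ φ, Tendsto (fun n => a n / n) atTop (𝓝 φ) ∧ ∀ k, 1 ≤ k → |a k - k * φ| ≤ g k := by
  have hsymm : ∀ k l, 1 ≤ k → 1 ≤ l → |a (k + l) - a k - a l| + g (k + l) ≤ g k + g l := by
    intro k l hk hl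
    rcases le_total k l with hkl | hlk
    · exact hag k l hk hkl
    · have := hag l k hl hlk
      rwa [add_comm l k, sub_right_comm, add_comm (g l)] at this
  set b : ℕ → ℝ := fun n => if n = 0 then 0 else a n + g n
  set u : ℕ → ℝ := fun n => if n = 0 then 0 else g n - a n
  have hb : Subadditive b := subadditive_ite_zero fun k l hk hl => by
    linarith [hsymm k l hk hl, le_abs_self (a (k + l) - a k - a l)]
  have hu : Subadditive u := subadditive_ite_zero fun k l hk hl => by
    linarith [hsymm k l hk hl, neg_abs_le (a (k + l) - a k - a l)]
  have hb_bdd : BddBelow (Set.range fun n => b n / n) :=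
    hu.bddBelow_div_of_le_add (w := fun n => 2 * g n)
      (by simpa only [mul_div_assoc] using (hg.const_mul 2).bddBelow_range)
      fun n hn => by simp only [b, u, if_neg hn]; linarith
  set φ := hb.lim
  have ha : Tendsto (fun n => a n / n) atTop (𝓝 φ) := by
    refine ((hb.tendsto_lim hb_bdd).sub hg).congr' ?_ |>.trans (by rw [sub_zero])
    filter_upwards [eventually_ne_atTop 0] with n hn
    simp only [b, if_neg hn, add_div, add_sub_cancel_right]
  have hu_lim : Tendsto (fun n => u n / n) atTop (𝓝 (-φ)) := by
    refine (hg.sub ha).congr' ?_ |>.trans (by rw [zero_sub])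
    filter_upwards [eventually_ne_atTop 0] with n hn
    simp only [u, if_neg hn, sub_div]
  have hk_ne : ∀ k : ℕ, 1 ≤ k → k ≠ 0 := fun k hk => by omega
  refine ⟨φ, ha, fun k hk => abs_le.2 ⟨?_, ?_⟩⟩
  · have := hb.lim_le_div hb_bdd (hk_ne k hk)
    rw [le_div_iff₀ (by exact_mod_cast hk)] at this
    simp only [b, if_neg (hk_ne k hk)] at this
    linarith
  · have := hu.le_div_of_tendsto hu_lim (hk_ne k hk)
    rw [le_div_iff₀ (by exact_mod_cast hk)] at this
    simp only [u, if_neg (hk_ne k hk)] at this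
    linarith

theorem abs_log_sub_log_le {x y c : ℝ} (hx : 0 < x) (hy : 0 < y) (hxy : x ≤ c * y)
    (hyx : y ≤ c * x) : |log x - log y| ≤ log c := by
  have hc : 0 < c := pos_of_mul_pos_left (hx.trans_le hxy) hy.le
  have hx' := log_le_log hx hxy
  have hy' := log_le_log hy hyx
  rw [log_mul hc.ne' hy.ne'] at hx'
  rw [log_mul hc.ne' hx.ne'] at hy'
  exact abs_sub_le_iff.2 ⟨by linarith, by linarith⟩

theorem div_le_and_le_mul_exp_of_abs_log_sub_le {x t s : ℝ} (hx : 0 < x) (hs : 0 < s)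
    (h : |log x - t| ≤ log s) : exp t / s ≤ x ∧ x ≤ s * exp t := by
  obtain ⟨hlo, hhi⟩ := abs_le.1 h
  constructor
  · calc exp t / s = exp (t - log s) := by rw [exp_sub, exp_log hs]
      _ ≤ exp (log x) := exp_le_exp.2 (by linarith)
      _ = x := exp_log hx
  · calc x = exp (log x) := (exp_log hx).symm
      _ ≤ exp (log s + t) := exp_le_exp.2 (by linarith)
      _ = s * exp t := by rw [exp_add, exp_log hs]

theorem log_two_mul_mul_add_one_add_log_add_le {C k l : ℝ} (hC : 1 ≤ C) (hk : 1 ≤ k)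
    (hkl : k ≤ l) :
    log (2 * k * C + 1) + log (k + l) ≤ log (6 * C) + log k + log l := by
  have hl : 1 ≤ l := hk.trans hkl
  have hpoly : (2 * k * C + 1) * (k + l) ≤ 6 * C * k * l := by
    nlinarith [mul_le_mul hk hC zero_le_one (by linarith : (0 : ℝ) ≤ k),
      mul_le_mul_of_nonneg_left hkl (by positivity : (0 : ℝ) ≤ 2 * k * C)]
  rw [← log_mul (by positivity) (by positivity), ← log_mul (by positivity) (by positivity),
    ← log_mul (by positivity) (by positivity)]
  exact log_le_log (by positivity) hpoly

theorem abs_log_add_sub_le_of_le {C : ℕ} {θ : ℕ → ℝ} (hθ : ∀ k, 1 ≤ k → 0 < θ k)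
    (hupper : ∀ k l, 1 ≤ k → 1 ≤ l → θ (k + l) ≤ (2 * l * C + 1 : ℝ) * θ l * θ k)
    (hlower : ∀ k l, 1 ≤ k → 1 ≤ l → θ (k + l) ≥ (1 / (2 * l * C + 1 : ℝ)) * θ l * θ k)
    {k l : ℕ} (hk : 1 ≤ k) (hkl : k ≤ l) :
    |log (θ (k + l)) - (log (θ k) + log (θ l))| ≤ log (2 * k * C + 1) := by
  have hc : (0 : ℝ) < 2 * k * C + 1 := by positivity
  rw [← log_mul (hθ k hk).ne' (hθ l (by omega)).ne']
  refine abs_log_sub_log_le (hθ _ (by omega)) (mul_pos (hθ k hk) (hθ l (by omega))) ?_ ?_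
  · simpa [add_comm l k, mul_assoc] using hupper l k (by omega) hk
  · have := hlower l k (by omega) hk
    rwa [add_comm l k, ge_iff_le, one_div, mul_assoc, inv_mul_le_iff₀ hc] at this

theorem neg_log_add_approx_additive {C : ℕ} (hC : 0 < C) {θ : ℕ → ℝ}
    (hθ : ∀ k, 1 ≤ k → 0 < θ k)
    (hupper : ∀ k l, 1 ≤ k → 1 ≤ l → θ (k + l) ≤ (2 * l * C + 1 : ℝ) * θ l * θ k)
    (hlower : ∀ k l, 1 ≤ k → 1 ≤ l → θ (k + l) ≥ (1 / (2 * l * C + 1 : ℝ)) * θ l * θ k)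
    (k l : ℕ) (hk : 1 ≤ k) (hkl : k ≤ l) :
    |-log (θ (k + l)) - -log (θ k) - -log (θ l)| + (log (6 * C) + log ((k + l : ℕ) : ℝ))
      ≤ (log (6 * C) + log k) + (log (6 * C) + log l) := by
  have hlog := log_two_mul_mul_add_one_add_log_add_le (by exact_mod_cast hC : (1 : ℝ) ≤ C)
    (by exact_mod_cast hk : (1 : ℝ) ≤ k) (by exact_mod_cast hkl : (k : ℝ) ≤ l)
  rw [show -log (θ (k + l)) - -log (θ k) - -log (θ l)
    = -(log (θ (k + l)) - (log (θ k) + log (θ l))) by ring, abs_neg]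
  push_cast
  linarith [abs_log_add_sub_le_of_le hθ hupper hlower hk hkl]

/-- If `θ_k ∈ (0,1]` satisfies the approximate sub- and super-multiplicativity
`θ_{k+l} ≤ (2lC+1) θ_l θ_k` and `θ_{k+l} ≥ θ_l θ_k / (2lC+1)` for all `k, l ≥ 1`,
then `φ = lim -log θ_k / k` exists and is finite, and there are `σ₁, σ₂ > 0` with
`σ₁ k⁻¹ e^{-kφ} ≤ θ_k ≤ σ₂ k e^{-kφ}` for all `k ≥ 1`. -/
theorem stmt_4 (C : ℕ) (hC : 0 < C) (θ : ℕ → ℝ)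
    (hθ : ∀ k, 1 ≤ k → θ k ∈ Set.Ioc (0 : ℝ) 1)
    (hupper : ∀ k l, 1 ≤ k → 1 ≤ l →
      θ (k + l) ≤ (2 * l * C + 1 : ℝ) * θ l * θ k)
    (hlower : ∀ k l, 1 ≤ k → 1 ≤ l →
      θ (k + l) ≥ (1 / (2 * l * C + 1 : ℝ)) * θ l * θ k) :
    ∃ φ : ℝ, Filter.Tendsto (fun k : ℕ => -(Real.log (θ k)) / k) Filter.atTop (nhds φ) ∧
      ∃ σ₁ > (0 : ℝ), ∃ σ₂ > (0 : ℝ), ∀ k : ℕ, 1 ≤ k →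
        σ₁ * (k : ℝ)⁻¹ * Real.exp (-(k : ℝ) * φ) ≤ θ k ∧
        θ k ≤ σ₂ * (k : ℝ) * Real.exp (-(k : ℝ) * φ) := by
  have hθpos : ∀ k, 1 ≤ k → 0 < θ k := fun k hk => (hθ k hk).1
  have hadditive := neg_log_add_approx_additive hC hθpos hupper hlower
  have hsublinear : Tendsto (fun n : ℕ => (log (6 * C) + log n) / n) atTop (𝓝 0) := by
    simp_rw [add_div]
    simpa using (tendsto_const_div_atTop_nhds_zero_nat _).add
      (isLittleO_log_id_atTop.tendsto_div_nhds_zero.comp tendsto_natCast_atTop_atTop)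
  obtain ⟨φ, hφ, hdev⟩ := exists_tendsto_div_and_abs_sub_le_of_abs_sub_le
    (a := fun k => -log (θ k)) hadditive hsublinear
  refine ⟨φ, hφ, (6 * C)⁻¹, by positivity, 6 * C, by positivity, fun k hk => ?_⟩
  have hk0 : (0 : ℝ) < k := by exact_mod_cast hk
  have hdev' : |log (θ k) - -k * φ| ≤ log (6 * C * k) := by
    rw [log_mul (by positivity) hk0.ne', ← abs_neg]
    convert hdev k hk using 2
    ring
  obtain ⟨hlo, hhi⟩ := div_le_and_le_mul_exp_of_abs_log_sub_le (hθpos k hk) (by positivity) hdev'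
  exact ⟨le_of_eq_of_le (by field_simp) hlo, hhi⟩
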